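/- arXiv:0804.0738 — 2 statements merged into one kernel-verified Lean document; each statement's English description precedes it below -/
import Mathlib

section
/- For any real number q, the almost complex structure J defined by J X1 = X2, J X2 = -X1, J X3 = X4 - q X2, J X4 = -X3 - q X1 on the 4-dimensional Lie algebra with nonzero brackets [X2,X3] = -X1, [X4,X2] = X2, [X4,X3] = -X3 (the Inoue surface S^± Lie algebra) satisfies J^2 = -id and is integrable. -/
/-!
The Nijenhuis tensor `N` of an almost complex structure `J` is skew and `J`-antilinear in each
argument, `N (J X) Y = -J (N X Y)`, and `N X X = 0`. So `N` vanishes identically as soon as it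
vanishes on one pair `x, y` with `x, J x, y, J y` spanning the algebra. For the Inoue algebra
take `x = X₁`, `y = X₃`: then `J X₁ = X₂`, `J X₃ + q J X₁ = X₄`, and `N X₁ X₃ = 0` is a two-line
computation.
-/

section Nijenhuis

variable {R L : Type*} [CommRing R] [LieRing L] [LieAlgebra R L]

def nijenhuis (J : L →ₗ[R] L) : L →ₗ[R] L →ₗ[R] L :=
  LinearMap.mk₂ R (fun X Y => ⁅J X, J Y⁆ - J ⁅J X, Y⁆ - J ⁅X, J Y⁆ - ⁅X, Y⁆)
    (by intros; simp only [map_add, add_lie]; abel)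
    (by intros; simp only [map_smul, smul_lie, smul_sub])
    (by intros; simp only [map_add, lie_add]; abel)
    (by intros; simp only [map_smul, lie_smul, smul_sub])

variable (J : L →ₗ[R] L)

@[simp]
theorem nijenhuis_apply (X Y : L) :
    nijenhuis J X Y = ⁅J X, J Y⁆ - J ⁅J X, Y⁆ - J ⁅X, J Y⁆ - ⁅X, Y⁆ :=
  rfl

theorem nijenhuis_swap (X Y : L) : nijenhuis J Y X = -nijenhuis J X Y := by
  simp only [nijenhuis_apply, ← lie_skew X, ← lie_skew (J X), map_neg]
  abel

theorem nijenhuis_self (X : L) : nijenhuis J X X = 0 := by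
  simp only [nijenhuis_apply, lie_self, ← lie_skew X (J X), map_neg]
  abel

variable {J}

theorem nijenhuis_apply_left_apply (hJ : ∀ X, J (J X) = -X) (X Y : L) :
    nijenhuis J (J X) Y = -J (nijenhuis J X Y) := by
  simp only [nijenhuis_apply, hJ, map_sub, map_neg, neg_lie]
  abel

theorem nijenhuis_apply_right_apply (hJ : ∀ X, J (J X) = -X) (X Y : L) :
    nijenhuis J X (J Y) = -J (nijenhuis J X Y) := by
  rw [nijenhuis_swap J (J Y), nijenhuis_apply_left_apply hJ, nijenhuis_swap J Y, map_neg, neg_neg]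

theorem nijenhuis_eq_zero_of_span_eq_top (hJ : ∀ X, J (J X) = -X) {x y : L}
    (hspan : Submodule.span R {x, J x, y, J y} = ⊤) (hxy : nijenhuis J x y = 0) :
    nijenhuis J = 0 := by
  have h_base : ∀ u ∈ ({x, y} : Set L), ∀ v ∈ ({x, y} : Set L), nijenhuis J u v = 0 := by
    simp only [Set.forall_mem_insert, Set.mem_singleton_iff, forall_eq, nijenhuis_self, hxy,
      nijenhuis_swap J x y, neg_zero, and_self]
  have h_gen : ∀ u ∈ ({x, J x, y, J y} : Set L), ∃ u₀ ∈ ({x, y} : Set L), u = u₀ ∨ u = J u₀ := by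
    rintro u (rfl | rfl | rfl | rfl) <;> simp
  refine LinearMap.ext_on hspan fun u hu => LinearMap.ext_on hspan fun v hv => ?_
  obtain ⟨u₀, hu₀, hu₀u | hu₀u⟩ := h_gen u hu <;> obtain ⟨v₀, hv₀, hv₀v | hv₀v⟩ := h_gen v hv <;>
    simp only [hu₀u, hv₀v, nijenhuis_apply_left_apply hJ, nijenhuis_apply_right_apply hJ, h_base u₀ hu₀ v₀ hv₀,
      map_zero, neg_zero, LinearMap.zero_apply]

end Nijenhuis

theorem inoue_Spm_complex_structure_integrable_general
    (q : ℝ)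
    (g : Type*) [LieRing g] [LieAlgebra ℝ g] (b : Module.Basis (Fin 4) ℝ g)
    (h23 : ⁅b 1, b 2⁆ = -(b 0)) (h42 : ⁅b 3, b 1⁆ = b 1)
    (h12 : ⁅b 0, b 1⁆ = 0) (h13 : ⁅b 0, b 2⁆ = 0) (h14 : ⁅b 0, b 3⁆ = 0)
    (J : g →ₗ[ℝ] g)
    (hJ1 : J (b 0) = b 1) (hJ2 : J (b 1) = -(b 0))
    (hJ3 : J (b 2) = b 3 - q • b 1) (hJ4 : J (b 3) = -(b 2) - q • b 0) :
    (∀ X : g, J (J X) = -X) ∧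
      ∀ X Y : g, ⁅J X, J Y⁆ - J ⁅J X, Y⁆ - J ⁅X, J Y⁆ - ⁅X, Y⁆ = 0 := by
  have hJ : ∀ X, J (J X) = -X := by
    have hJJ : J ∘ₗ J = -LinearMap.id := b.ext fun i => by
      fin_cases i <;> simp [hJ1, hJ2, hJ3, hJ4]
    exact fun X => LinearMap.congr_fun hJJ X
  have hb3 : b 3 = J (b 2) + q • J (b 0) := by rw [hJ3, hJ1, sub_add_cancel]
  have hspan : Submodule.span ℝ {b 0, J (b 0), b 2, J (b 2)} = ⊤ := by
    refine top_le_iff.mp (b.span_eq ▸ Submodule.span_le.mpr ?_)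
    rintro _ ⟨i, rfl⟩
    fin_cases i
    · exact Submodule.subset_span (by simp)
    · exact hJ1 ▸ Submodule.subset_span (by simp)
    · exact Submodule.subset_span (by simp)
    · exact hb3 ▸ add_mem (Submodule.subset_span (by simp))
        (Submodule.smul_mem _ _ (Submodule.subset_span (by simp)))
  have h24 : ⁅b 1, b 3⁆ = -(b 1) := by rw [← lie_skew, h42]
  have h02 : nijenhuis J (b 0) (b 2) = 0 := by
    simp only [nijenhuis_apply, hJ1, hJ3, h23, h24, h12, h13, h14, lie_sub, lie_smul, lie_self,
      map_neg, smul_zero, sub_zero, sub_neg_eq_add, neg_add_cancel, map_zero]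
  have hN := nijenhuis_eq_zero_of_span_eq_top hJ hspan h02
  exact ⟨hJ, fun X Y => by simpa using LinearMap.congr_fun₂ hN X Y⟩

/-- For `q : ℝ`, the almost complex structure `J X₁ = X₂, J X₂ = -X₁,
`J X₃ = X₄ - qX₂, J X₄ = -X₃ - qX₁` on the Inoue surface `S^±` Lie algebra
(brackets `⁅X₂,X₃⁆ = -X₁`, `⁅X₄,X₂⁆ = X₂`, `⁅X₄,X₃⁆ = -X₃`)
satisfies `J² = -id` and is integrable. -/
theorem inoue_Spm_complex_structure_integrable
    (q : ℝ)
    (g : Type*) [LieRing g] [LieAlgebra ℝ g] (b : Module.Basis (Fin 4) ℝ g)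
    (h23 : ⁅b 1, b 2⁆ = -(b 0)) (h42 : ⁅b 3, b 1⁆ = b 1) (h43 : ⁅b 3, b 2⁆ = -(b 2))
    (h12 : ⁅b 0, b 1⁆ = 0) (h13 : ⁅b 0, b 2⁆ = 0) (h14 : ⁅b 0, b 3⁆ = 0)
    (J : g →ₗ[ℝ] g)
    (hJ1 : J (b 0) = b 1) (hJ2 : J (b 1) = -(b 0))
    (hJ3 : J (b 2) = b 3 - q • b 1) (hJ4 : J (b 3) = -(b 2) - q • b 0) :
    (∀ X : g, J (J X) = -X) ∧
      ∀ X Y : g, ⁅J X, J Y⁆ - J ⁅J X, Y⁆ - J ⁅X, J Y⁆ - ⁅X, Y⁆ = 0 :=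
  inoue_Spm_complex_structure_integrable_general q g b h23 h42 h12 h13 h14 J hJ1 hJ2 hJ3 hJ4
end

section
/- The Lie algebra g = span{X1,...,X_{2l}, X_{2l+1},...,X_{2l+2k}} with brackets [X_{2l+2i}, X_{2j-1}] = -X_{2j}, [X_{2l+2i}, X_{2j}] = X_{2j-1} (1 ≤ i ≤ k, 1 ≤ j ≤ l), all others zero, is a 2-step solvable unimodular Lie algebra whose adjoint operators ad(X) all have purely imaginary spectrum (i.e., ad(X)² has non-positive real eigenvalues); in particular trace(ad X) = 0 for all X. -/
/-! The brackets of basis vectors lie in the span `𝔞` of `X₁,…,X_{2l}`, which is abelian, so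
`[𝔤,𝔤] ⊆ 𝔞` and `𝔤` is 2-step solvable. On `𝔞` every `ad X` acts as `t(X)` times the rotation
`X_{2j-1} ↦ -X_{2j}`, `X_{2j} ↦ X_{2j-1}` of each plane, where `t(X)` is the sum of the
`X_{2l+2i}`-coordinates of `X`; hence `(ad X)² = -t(X)²` on `𝔞`. Since `ad X` maps `𝔤` into `𝔞`,
its diagonal entries vanish (giving trace zero), and any eigenvalue of `(ad X)²` is either `0` or
`-t(X)²`. -/

open Module Submodule

theorem lie_mem_of_mem_span {R L : Type*} [CommRing R] [LieRing L] [LieAlgebra R L]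
    {s t : Set L} {S : Submodule R L} (h : ∀ x ∈ s, ∀ y ∈ t, ⁅x, y⁆ ∈ S)
    {x y : L} (hx : x ∈ span R s) (hy : y ∈ span R t) : ⁅x, y⁆ ∈ S := by
  let f : L →ₗ[R] L →ₗ[R] L := LieModule.toEnd R L L
  have hle : map₂ f (span R s) (span R t) ≤ S := by
    rw [map₂_span_span, span_le, Set.image2_subset_iff]
    exact h
  exact hle (apply_mem_map₂ f hx hy)

theorem Module.Basis.lie_eq_sum_repr {R L ι : Type*} [CommRing R] [LieRing L] [LieAlgebra R L]
    [Fintype ι] (b : Basis ι R L) (x y : L) :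
    ⁅x, y⁆ = ∑ m, b.repr x m • ⁅b m, y⁆ := by
  conv_lhs => rw [← b.sum_repr x]
  simp only [sum_lie, smul_lie]

theorem Module.End.eigenvalue_eq_zero_or_eq_of_range_le {K M : Type*} [Field K]
    [AddCommGroup M] [Module K M] {f : End K M} {S : Submodule K M} {c μ : K}
    (hrange : ∀ v, f v ∈ S) (hS : ∀ s ∈ S, f s = c • s) (hμ : f.HasEigenvalue μ) :
    μ = 0 ∨ μ = c := by
  obtain ⟨v, hv⟩ := hμ.exists_hasEigenvector
  rcases eq_or_ne μ 0 with hμ0 | hμ0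
  · exact Or.inl hμ0
  have hvS : v ∈ S := (S.smul_mem_iff hμ0).mp (hv.apply_eq_smul ▸ hrange v)
  have hcμ : (c - μ) • v = 0 := by rw [sub_smul, ← hS v hvS, hv.apply_eq_smul, sub_self]
  exact Or.inr (sub_eq_zero.mp ((smul_eq_zero.mp hcμ).resolve_right hv.2)).symm

section

variable {k l : ℕ} {g : Type*} [LieRing g] [LieAlgebra ℝ g]

structure IsRotationBasis (b : Basis ((Fin l × Fin 2) ⊕ (Fin k × Fin 2)) ℝ g) : Prop where
  lie_rot_fst : ∀ (i : Fin k) (j : Fin l),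
    ⁅b (Sum.inr (i, 1)), b (Sum.inl (j, 0))⁆ = -(b (Sum.inl (j, 1)))
  lie_rot_snd : ∀ (i : Fin k) (j : Fin l),
    ⁅b (Sum.inr (i, 1)), b (Sum.inl (j, 1))⁆ = b (Sum.inl (j, 0))
  lie_inl_inl : ∀ p q : Fin l × Fin 2, ⁅b (Sum.inl p), b (Sum.inl q)⁆ = 0
  lie_inr_inr : ∀ p q : Fin k × Fin 2, ⁅b (Sum.inr p), b (Sum.inr q)⁆ = 0
  lie_inr_zero_inl : ∀ (i : Fin k) (p : Fin l × Fin 2),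
    ⁅b (Sum.inr (i, 0)), b (Sum.inl p)⁆ = 0

variable (b : Basis ((Fin l × Fin 2) ⊕ (Fin k × Fin 2)) ℝ g)

def planeSpan : Submodule ℝ g := span ℝ (b '' Set.range Sum.inl)

noncomputable def rotationRate (x : g) : ℝ := ∑ i : Fin k, b.repr x (Sum.inr (i, 1))

variable {b}

theorem basis_inl_mem_planeSpan (p : Fin l × Fin 2) : b (Sum.inl p) ∈ planeSpan b :=
  subset_span ⟨Sum.inl p, ⟨p, rfl⟩, rfl⟩

theorem repr_inr_eq_zero_of_mem_planeSpan {v : g} (hv : v ∈ planeSpan b) (q : Fin k × Fin 2) :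
    b.repr v (Sum.inr q) = 0 := by
  by_contra hq
  obtain ⟨p, hp⟩ := b.mem_span_image.mp hv (Finsupp.mem_support_iff.mpr hq)
  exact Sum.inl_ne_inr hp

namespace IsRotationBasis

theorem lie_basis_mem_planeSpan (hb : IsRotationBasis b)
    (m n : (Fin l × Fin 2) ⊕ (Fin k × Fin 2)) :
    ⁅b m, b n⁆ ∈ planeSpan b := by
  have hrot : ∀ i p, ⁅b (Sum.inr i), b (Sum.inl p)⁆ ∈ planeSpan b
    | (i, 0), p => by rw [hb.lie_inr_zero_inl]; exact zero_mem _
    | (i, 1), (j, 0) => by rw [hb.lie_rot_fst]; exact neg_mem (basis_inl_mem_planeSpan _)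
    | (i, 1), (j, 1) => by rw [hb.lie_rot_snd]; exact basis_inl_mem_planeSpan _
  rcases m with p | i <;> rcases n with q | j
  · rw [hb.lie_inl_inl]; exact zero_mem _
  · rw [← lie_skew]; exact neg_mem (hrot j p)
  · exact hrot i q
  · rw [hb.lie_inr_inr]; exact zero_mem _

theorem lie_mem_planeSpan (hb : IsRotationBasis b) (x y : g) : ⁅x, y⁆ ∈ planeSpan b := by
  refine lie_mem_of_mem_span (s := Set.range b) (t := Set.range b) ?_ ?_ ?_
  · rintro _ ⟨m, rfl⟩ _ ⟨n, rfl⟩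
    exact hb.lie_basis_mem_planeSpan m n
  all_goals rw [b.span_eq]; exact mem_top

theorem lie_eq_zero_of_mem_planeSpan (hb : IsRotationBasis b) {x y : g}
    (hx : x ∈ planeSpan b) (hy : y ∈ planeSpan b) :
    ⁅x, y⁆ = 0 := by
  rw [← mem_bot ℝ]
  refine lie_mem_of_mem_span ?_ hx hy
  rintro _ ⟨_, ⟨p, rfl⟩, rfl⟩ _ ⟨_, ⟨q, rfl⟩, rfl⟩
  rw [hb.lie_inl_inl]; exact zero_mem _

theorem lie_basis_fst (hb : IsRotationBasis b) (x : g) (j : Fin l) :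
    ⁅x, b (Sum.inl (j, 0))⁆ = -rotationRate b x • b (Sum.inl (j, 1)) := by
  rw [b.lie_eq_sum_repr, Fintype.sum_sum_type]
  simp only [hb.lie_inl_inl, smul_zero, Finset.sum_const_zero, zero_add,
    Fintype.sum_prod_type, Fin.sum_univ_two, hb.lie_inr_zero_inl, hb.lie_rot_fst, smul_neg,
    rotationRate, Finset.sum_neg_distrib, neg_smul, Finset.sum_smul]

theorem lie_basis_snd (hb : IsRotationBasis b) (x : g) (j : Fin l) :
    ⁅x, b (Sum.inl (j, 1))⁆ = rotationRate b x • b (Sum.inl (j, 0)) := by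
  rw [b.lie_eq_sum_repr, Fintype.sum_sum_type]
  simp only [hb.lie_inl_inl, smul_zero, Finset.sum_const_zero, zero_add,
    Fintype.sum_prod_type, Fin.sum_univ_two, hb.lie_inr_zero_inl, hb.lie_rot_snd,
    rotationRate, Finset.sum_smul]

theorem ad_sq_apply_of_mem_planeSpan (hb : IsRotationBasis b) (x : g) {v : g}
    (hv : v ∈ planeSpan b) :
    (LieAlgebra.ad ℝ g x ^ 2) v = -rotationRate b x ^ 2 • v := by
  refine LinearMap.eqOn_span (g := -rotationRate b x ^ 2 • LinearMap.id) ?_ hv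
  rintro _ ⟨_, ⟨⟨j, e⟩, rfl⟩, rfl⟩
  match e with
  | 0 | 1 =>
    simp only [pow_two, Module.End.mul_apply, LieAlgebra.ad_apply, hb.lie_basis_fst,
        hb.lie_basis_snd, lie_smul, smul_smul, LinearMap.smul_apply, LinearMap.id_apply]
    ring_nf

theorem trace_ad_eq_zero (hb : IsRotationBasis b) (x : g) :
    LinearMap.trace ℝ g (LieAlgebra.ad ℝ g x) = 0 := by
  rw [LinearMap.trace_eq_matrix_trace ℝ b, Matrix.trace]
  refine Finset.sum_eq_zero ?_
  rintro (⟨j, e⟩ | q) -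
  all_goals simp only [Matrix.diag_apply, LinearMap.toMatrix_apply, LieAlgebra.ad_apply]
  · match e with
    | 0 => simp [hb.lie_basis_fst]
    | 1 => simp [hb.lie_basis_snd]
  · exact repr_inr_eq_zero_of_mem_planeSpan (hb.lie_mem_planeSpan x _) q

theorem nonpos_of_hasEigenvalue_ad_sq (hb : IsRotationBasis b) {x : g} {μ : ℝ}
    (hμ : (LieAlgebra.ad ℝ g x ^ 2).HasEigenvalue μ) : μ ≤ 0 := by
  have hrange : ∀ v, (LieAlgebra.ad ℝ g x ^ 2) v ∈ planeSpan b := fun v =>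
    hb.lie_mem_planeSpan x _
  rcases Module.End.eigenvalue_eq_zero_or_eq_of_range_le hrange
    (fun _ hv => hb.ad_sq_apply_of_mem_planeSpan x hv) hμ with rfl | rfl
  · exact le_rfl
  · exact neg_nonpos.mpr (sq_nonneg _)

end IsRotationBasis

end

theorem rigid_type_solvable_unimodular_general
    (k l : ℕ)
    (g : Type*) [LieRing g] [LieAlgebra ℝ g]
    (b : Module.Basis ((Fin l × Fin 2) ⊕ (Fin k × Fin 2)) ℝ g)
    (hnz1 : ∀ (i : Fin k) (j : Fin l),
      ⁅b (Sum.inr (i, 1)), b (Sum.inl (j, 0))⁆ = -(b (Sum.inl (j, 1))))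
    (hnz2 : ∀ (i : Fin k) (j : Fin l),
      ⁅b (Sum.inr (i, 1)), b (Sum.inl (j, 1))⁆ = b (Sum.inl (j, 0)))
    (hz1 : ∀ p q : Fin l × Fin 2, ⁅b (Sum.inl p), b (Sum.inl q)⁆ = 0)
    (hz2 : ∀ p q : Fin k × Fin 2, ⁅b (Sum.inr p), b (Sum.inr q)⁆ = 0)
    (hz3 : ∀ (i : Fin k) (p : Fin l × Fin 2),
      ⁅b (Sum.inr (i, 0)), b (Sum.inl p)⁆ = 0) :
    ((∀ X₁ X₂ X₃ X₄ : g, ⁅⁅X₁, X₂⁆, ⁅X₃, X₄⁆⁆ = 0) ∧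
      (∀ X : g, LinearMap.trace ℝ g (LieAlgebra.ad ℝ g X) = 0) ∧
      (∀ (X : g) (μ : ℝ),
        Module.End.HasEigenvalue ((LieAlgebra.ad ℝ g X) ^ 2) μ → μ ≤ 0)) := by
  have hb : IsRotationBasis b := ⟨hnz1, hnz2, hz1, hz2, hz3⟩
  refine ⟨fun X₁ X₂ X₃ X₄ => ?_, hb.trace_ad_eq_zero, fun _ _ => hb.nonpos_of_hasEigenvalue_ad_sq⟩
  exact hb.lie_eq_zero_of_mem_planeSpan (hb.lie_mem_planeSpan X₁ X₂) (hb.lie_mem_planeSpan X₃ X₄)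

/-- The Lie algebra `g` of Example 3: basis `X₁,…,X_{2l}, X_{2l+1},…,X_{2l+2k}`
(here indexed by `(Fin l × Fin 2) ⊕ (Fin k × Fin 2)`, with `inl (j,0) = X_{2j-1}`,
`inl (j,1) = X_{2j}`, `inr (i,0) = X_{2l+2i-1}`, `inr (i,1) = X_{2l+2i}`) and
nonzero brackets `⁅X_{2l+2i}, X_{2j-1}⁆ = -X_{2j}`, `⁅X_{2l+2i}, X_{2j}⁆ = X_{2j-1}`,
is 2-step solvable, unimodular, and every `ad X` has purely imaginary spectrum:
every real eigenvalue of `(ad X)²` is non-positive. -/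
theorem rigid_type_solvable_unimodular
    (k l : ℕ) (hk : 1 ≤ k) (hl : 1 ≤ l)
    (g : Type*) [LieRing g] [LieAlgebra ℝ g] [Module.Finite ℝ g]
    (b : Module.Basis ((Fin l × Fin 2) ⊕ (Fin k × Fin 2)) ℝ g)
    (hnz1 : ∀ (i : Fin k) (j : Fin l),
      ⁅b (Sum.inr (i, 1)), b (Sum.inl (j, 0))⁆ = -(b (Sum.inl (j, 1))))
    (hnz2 : ∀ (i : Fin k) (j : Fin l),
      ⁅b (Sum.inr (i, 1)), b (Sum.inl (j, 1))⁆ = b (Sum.inl (j, 0)))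
    (hz1 : ∀ p q : Fin l × Fin 2, ⁅b (Sum.inl p), b (Sum.inl q)⁆ = 0)
    (hz2 : ∀ p q : Fin k × Fin 2, ⁅b (Sum.inr p), b (Sum.inr q)⁆ = 0)
    (hz3 : ∀ (i : Fin k) (p : Fin l × Fin 2),
      ⁅b (Sum.inr (i, 0)), b (Sum.inl p)⁆ = 0) :
    ((∀ X₁ X₂ X₃ X₄ : g, ⁅⁅X₁, X₂⁆, ⁅X₃, X₄⁆⁆ = 0) ∧
      (∀ X : g, LinearMap.trace ℝ g (LieAlgebra.ad ℝ g X) = 0) ∧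
      (∀ (X : g) (μ : ℝ),
        Module.End.HasEigenvalue ((LieAlgebra.ad ℝ g X) ^ 2) μ → μ ≤ 0)) :=
  rigid_type_solvable_unimodular_general k l g b hnz1 hnz2 hz1 hz2 hz3
end
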